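/- arXiv:2008.00595 — 3 statements merged into one kernel-verified Lean document; each statement's English description precedes it below -/
import Mathlib

section
/- (Proposition 4, minimizer correspondence under time rescaling.) Let t₀ < t₁ be real numbers, Δ = (t₁ − t₀)/2, and let n ≥ 1 and s ≥ 1 be natural numbers. Fix boundary data δⱼ⁻, δⱼ⁺ ∈ ℝ for j = 0,…,s−1 and set δ̄ⱼ⁻ = Δʲ·δⱼ⁻ and δ̄ⱼ⁺ = Δʲ·δⱼ⁺. Let F be the set of real polynomials p of degree < n with p⁽ʲ⁾(t₀) = δⱼ⁻ and p⁽ʲ⁾(t₁) = δⱼ⁺ for all j < s, and let F̄ be the set of real polynomials q of degree < n with q⁽ʲ⁾(−1) = δ̄ⱼ⁻ and q⁽ʲ⁾(1) = δ̄ⱼ⁺ for all j < s. Then a polynomial q ∈ F̄ minimizes ∫_{−1}^{1} (q⁽⁴⁾(τ))² dτ over F̄ if and only if the polynomial p defined by p(t) = q((t − t₀)/Δ − 1) belongs to F and minimizes ∫_{t₀}^{t₁} (p⁽⁴⁾(t))² dt over F. -/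
/-!
The substitution `q ↦ q ∘ (Δ⁻¹ X + b)` with `b = -t₀/Δ - 1` is a bijection of `ℝ[X]` that
preserves degree, sends the endpoints `t₀, t₁` to `-1, 1` and multiplies the `j`-th derivative
by `Δ⁻ʲ`; hence it maps `F̄` onto `F`. By the change of variables `τ = (t - t₀)/Δ - 1`, it
multiplies the snap objective by the positive constant `Δ⁻⁸ · Δ`, so it also matches minimizers.
-/

open Polynomial

theorem and_forall_le_iff_of_surjective {α β γ δ : Type*} [LinearOrder γ] [Preorder δ]
    {e : α → β} (he : Function.Surjective e) {S : Set α} {T : Set β}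
    (hmem : ∀ x, e x ∈ T ↔ x ∈ S) {f : α → γ} {g : β → δ} {φ : γ → δ} (hφ : StrictMono φ)
    (hg : ∀ x, g (e x) = φ (f x)) (x : α) :
    (x ∈ S ∧ ∀ x' ∈ S, f x ≤ f x') ↔ (e x ∈ T ∧ ∀ y ∈ T, g (e x) ≤ g y) := by
  rw [he.forall]
  simp only [hmem, hg, hφ.le_iff_le]

namespace Polynomial

theorem iterate_derivative_comp_C_mul_X_add_C {R : Type*} [CommSemiring R] (p : R[X])
    (a b : R) (k : ℕ) :
    derivative^[k] (p.comp (C a * X + C b)) =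
      C (a ^ k) * (derivative^[k] p).comp (C a * X + C b) := by
  induction k with
  | zero => simp
  | succ k ih =>
    rw [Function.iterate_succ_apply', ih, derivative_C_mul, derivative_comp,
      Function.iterate_succ_apply']
    simp only [derivative_add, derivative_C_mul_X, derivative_C, add_zero]
    rw [← mul_assoc, ← C_mul, pow_succ]

theorem eval_iterate_derivative_comp_C_mul_X_add_C {R : Type*} [CommSemiring R] (p : R[X])
    (a b x : R) (k : ℕ) :
    (derivative^[k] (p.comp (C a * X + C b))).eval x =
      a ^ k * (derivative^[k] p).eval (a * x + b) := by
  simp [iterate_derivative_comp_C_mul_X_add_C]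

theorem degree_comp_C_mul_X_add_C {R : Type*} [Semiring R] [NoZeroDivisors R] (p : R[X])
    {a : R} (ha : a ≠ 0) (b : R) :
    (p.comp (C a * X + C b)).degree = p.degree := by
  rw [degree_comp (by rw [degree_linear ha]; exact zero_lt_one), degree_linear ha, mul_one]

theorem comp_C_mul_X_add_C_surjective {R : Type*} [CommRing R] {a : R} (ha : IsUnit a)
    (b : R) : Function.Surjective fun p : R[X] ↦ p.comp (C a * X + C b) :=
  have := ha.invertible
  (algEquivCMulXAddC a b).surjective

theorem integral_sq_eval_iterate_derivative_comp_C_mul_X_add_C (p : ℝ[X]) {a : ℝ}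
    (ha : a ≠ 0) (b x₀ x₁ : ℝ) (k : ℕ) :
    ∫ t in x₀..x₁, ((derivative^[k] (p.comp (C a * X + C b))).eval t) ^ 2 =
      a ^ (2 * k) * a⁻¹ * ∫ τ in a * x₀ + b..a * x₁ + b, ((derivative^[k] p).eval τ) ^ 2 := by
  simp_rw [eval_iterate_derivative_comp_C_mul_X_add_C, mul_pow, ← pow_mul, mul_comm k 2]
  rw [intervalIntegral.integral_const_mul,
    intervalIntegral.integral_comp_mul_add (fun τ ↦ ((derivative^[k] p).eval τ) ^ 2) ha,
    smul_eq_mul, mul_assoc]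

end Polynomial

theorem minimizer_correspondence_rescale_general (t₀ t₁ : ℝ) (ht : t₀ < t₁) (Δ : ℝ)
    (hΔ : Δ = (t₁ - t₀) / 2) (n s : ℕ)
    (δm δp : ℕ → ℝ) (F Fbar : Set (Polynomial ℝ))
    (hF : F = {p : Polynomial ℝ | p.degree < (n : WithBot ℕ) ∧
      ∀ j < s, (Polynomial.derivative^[j] p).eval t₀ = δm j ∧
        (Polynomial.derivative^[j] p).eval t₁ = δp j})
    (hFbar : Fbar = {q : Polynomial ℝ | q.degree < (n : WithBot ℕ) ∧
      ∀ j < s, (Polynomial.derivative^[j] q).eval (-1 : ℝ) = Δ ^ j * δm j ∧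
        (Polynomial.derivative^[j] q).eval (1 : ℝ) = Δ ^ j * δp j})
    (q p : Polynomial ℝ)
    (hp : p = q.comp (Polynomial.C Δ⁻¹ * Polynomial.X + Polynomial.C (-t₀ / Δ - 1))) :
    (q ∈ Fbar ∧ ∀ q' ∈ Fbar,
        (∫ τ in (-1 : ℝ)..1, ((Polynomial.derivative^[4] q).eval τ) ^ 2) ≤
          ∫ τ in (-1 : ℝ)..1, ((Polynomial.derivative^[4] q').eval τ) ^ 2) ↔
    (p ∈ F ∧ ∀ p' ∈ F,
        (∫ t in t₀..t₁, ((Polynomial.derivative^[4] p).eval t) ^ 2) ≤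
          ∫ t in t₀..t₁, ((Polynomial.derivative^[4] p').eval t) ^ 2) := by
  have hΔpos : 0 < Δ := by rw [hΔ]; linarith
  have hinv : Δ⁻¹ ≠ 0 := inv_ne_zero hΔpos.ne'
  have h₀ : Δ⁻¹ * t₀ + (-t₀ / Δ - 1) = -1 := by field_simp; ring
  have h₁ : Δ⁻¹ * t₁ + (-t₀ / Δ - 1) = 1 := by field_simp; linarith
  have hmem : ∀ w : ℝ[X], w.comp (C Δ⁻¹ * X + C (-t₀ / Δ - 1)) ∈ F ↔ w ∈ Fbar := by
    intro w
    simp only [hF, hFbar, Set.mem_ofPred_eq, degree_comp_C_mul_X_add_C _ hinv,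
      eval_iterate_derivative_comp_C_mul_X_add_C, h₀, h₁, inv_pow,
      inv_mul_eq_iff_eq_mul₀ (pow_ne_zero _ hΔpos.ne')]
  subst hp
  refine and_forall_le_iff_of_surjective (comp_C_mul_X_add_C_surjective hinv.isUnit _) hmem
    (f := fun w ↦ ∫ τ in (-1 : ℝ)..1, ((derivative^[4] w).eval τ) ^ 2)
    (g := fun w ↦ ∫ t in t₀..t₁, ((derivative^[4] w).eval t) ^ 2)
    (strictMono_mul_left_of_pos (by positivity : 0 < Δ⁻¹ ^ (2 * 4) * Δ⁻¹⁻¹)) (fun w ↦ ?_) q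
  rw [integral_sq_eval_iterate_derivative_comp_C_mul_X_add_C _ hinv, h₀, h₁]

/-- Proposition 4 (minimizer correspondence under time rescaling): with boundary data scaled
by powers of `Δ`, a polynomial `q` minimizes the snap objective over the nondimensional
feasible set `F̄` iff `p(t) = q((t - t₀)/Δ - 1)` belongs to the dimensional feasible set `F`
and minimizes the snap objective over `F`. -/
theorem minimizer_correspondence_rescale (t₀ t₁ : ℝ) (ht : t₀ < t₁) (Δ : ℝ)
    (hΔ : Δ = (t₁ - t₀) / 2) (n s : ℕ) (hn : 1 ≤ n) (hs : 1 ≤ s)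
    (δm δp : ℕ → ℝ) (F Fbar : Set (Polynomial ℝ))
    (hF : F = {p : Polynomial ℝ | p.degree < (n : WithBot ℕ) ∧
      ∀ j < s, (Polynomial.derivative^[j] p).eval t₀ = δm j ∧
        (Polynomial.derivative^[j] p).eval t₁ = δp j})
    (hFbar : Fbar = {q : Polynomial ℝ | q.degree < (n : WithBot ℕ) ∧
      ∀ j < s, (Polynomial.derivative^[j] q).eval (-1 : ℝ) = Δ ^ j * δm j ∧
        (Polynomial.derivative^[j] q).eval (1 : ℝ) = Δ ^ j * δp j})
    (q p : Polynomial ℝ)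
    (hp : p = q.comp (Polynomial.C Δ⁻¹ * Polynomial.X + Polynomial.C (-t₀ / Δ - 1))) :
    (q ∈ Fbar ∧ ∀ q' ∈ Fbar,
        (∫ τ in (-1 : ℝ)..1, ((Polynomial.derivative^[4] q).eval τ) ^ 2) ≤
          ∫ τ in (-1 : ℝ)..1, ((Polynomial.derivative^[4] q').eval τ) ^ 2) ↔
    (p ∈ F ∧ ∀ p' ∈ F,
        (∫ t in t₀..t₁, ((Polynomial.derivative^[4] p).eval t) ^ 2) ≤
          ∫ t in t₀..t₁, ((Polynomial.derivative^[4] p').eval t) ^ 2) :=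
  minimizer_correspondence_rescale_general t₀ t₁ ht Δ hΔ n s δm δp F Fbar hF hFbar q p hp
end

section
/- (Lemma 6, corrected: the forward–backward recursion solves the block-tridiagonal KKT system.) Let k ≥ 1 and let m₀, …, m_k be positive natural numbers. For i = 1,…,k let Bᵢ be a real m_{i−1}×m_{i−1} matrix, Cᵢ a real m_{i−1}×mᵢ matrix, Dᵢ a real mᵢ×mᵢ matrix, gᵢ⁻ ∈ ℝ^{m_{i−1}} and gᵢ⁺ ∈ ℝ^{mᵢ}. Define B̄₁ = B₁, ḡ₁ = g₁⁻, and for i = 2,…,k, B̄ᵢ = Bᵢ + D_{i−1} − C_{i−1}ᵀ B̄_{i−1}⁻¹ C_{i−1} and ḡᵢ = gᵢ⁻ + g_{i−1}⁺ − C_{i−1}ᵀ B̄_{i−1}⁻¹ ḡ_{i−1}. Assume B̄₁,…,B̄_k are invertible and S := D_k − C_kᵀ B̄_k⁻¹ C_k is invertible. Define x_k = S⁻¹ (g_k⁺ − C_kᵀ B̄_k⁻¹ ḡ_k), and backwards for i = k, k−1, …, 1, x_{i−1} = B̄ᵢ⁻¹ (ḡᵢ − Cᵢ xᵢ); also define λᵢ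 = gᵢ⁺ − Cᵢᵀ x_{i−1} − Dᵢ xᵢ for i = 1,…,k−1. Then (x₀,…,x_k, λ₁,…,λ_{k−1}) satisfies: B₁ x₀ + C₁ x₁ = g₁⁻; Bᵢ x_{i−1} + Cᵢ xᵢ − λ_{i−1} = gᵢ⁻ for i = 2,…,k; Cᵢᵀ x_{i−1} + Dᵢ xᵢ + λᵢ = gᵢ⁺ for i = 1,…,k−1; and C_kᵀ x_{k−1} + D_k x_k = g_k⁺. -/
open Matrix

/-- Lemma 6 (corrected): the forward–backward block recursion solves the block-tridiagonal
KKT system arising from the minimum-snap quadratic program. -/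
theorem forward_backward_recursion_solves_KKT (k : ℕ) (hk : 1 ≤ k)
    (m : ℕ → ℕ) (hm : ∀ i ≤ k, 0 < m i)
    (B : ∀ i : ℕ, Matrix (Fin (m (i - 1))) (Fin (m (i - 1))) ℝ)
    (C : ∀ i : ℕ, Matrix (Fin (m (i - 1))) (Fin (m i)) ℝ)
    (D : ∀ i : ℕ, Matrix (Fin (m i)) (Fin (m i)) ℝ)
    (gm : ∀ i : ℕ, Fin (m (i - 1)) → ℝ)
    (gp : ∀ i : ℕ, Fin (m i) → ℝ)
    (Bbar : ∀ i : ℕ, Matrix (Fin (m (i - 1))) (Fin (m (i - 1))) ℝ)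
    (gbar : ∀ i : ℕ, Fin (m (i - 1)) → ℝ)
    (hBbar1 : Bbar 1 = B 1)
    (hgbar1 : gbar 1 = gm 1)
    (hBbar : ∀ i, 2 ≤ i → i ≤ k →
      Bbar i = B i + D (i - 1) - (C (i - 1))ᵀ * (Bbar (i - 1))⁻¹ * C (i - 1))
    (hgbar : ∀ i, 2 ≤ i → i ≤ k →
      gbar i = gm i + gp (i - 1) -
        ((C (i - 1))ᵀ * (Bbar (i - 1))⁻¹).mulVec (gbar (i - 1)))
    (hBbarInv : ∀ i, 1 ≤ i → i ≤ k → IsUnit (Bbar i))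
    (S : Matrix (Fin (m k)) (Fin (m k)) ℝ)
    (hSdef : S = D k - (C k)ᵀ * (Bbar k)⁻¹ * C k)
    (hSInv : IsUnit S)
    (x : ∀ i : ℕ, Fin (m i) → ℝ)
    (hxk : x k = S⁻¹.mulVec (gp k - ((C k)ᵀ * (Bbar k)⁻¹).mulVec (gbar k)))
    (hx : ∀ i, 1 ≤ i → i ≤ k →
      x (i - 1) = (Bbar i)⁻¹.mulVec (gbar i - (C i).mulVec (x i)))
    (lam : ∀ i : ℕ, Fin (m i) → ℝ)
    (hlam : ∀ i, 1 ≤ i → i ≤ k - 1 →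
      lam i = gp i - ((C i)ᵀ).mulVec (x (i - 1)) - (D i).mulVec (x i)) :
    (B 1).mulVec (x 0) + (C 1).mulVec (x 1) = gm 1 ∧
    (∀ i, 2 ≤ i → i ≤ k →
      (B i).mulVec (x (i - 1)) + (C i).mulVec (x i) - lam (i - 1) = gm i) ∧
    (∀ i, 1 ≤ i → i ≤ k - 1 →
      ((C i)ᵀ).mulVec (x (i - 1)) + (D i).mulVec (x i) + lam i = gp i) ∧
    ((C k)ᵀ).mulVec (x (k - 1)) + (D k).mulVec (x k) = gp k := by
  have key : ∀ i, 1 ≤ i → i ≤ k →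
      (Bbar i).mulVec (x (i - 1)) = gbar i - (C i).mulVec (x i) := by
    intro i h1 h2
    rw [hx i h1 h2, Matrix.mulVec_mulVec,
      Matrix.mul_nonsing_inv _ ((Matrix.isUnit_iff_isUnit_det _).mp (hBbarInv i h1 h2)),
      Matrix.one_mulVec]
  have keyS : S.mulVec (x k) = gp k - ((C k)ᵀ * (Bbar k)⁻¹).mulVec (gbar k) := by
    rw [hxk, Matrix.mulVec_mulVec,
      Matrix.mul_nonsing_inv _ ((Matrix.isUnit_iff_isUnit_det _).mp hSInv),
      Matrix.one_mulVec]
  refine ⟨?_, ?_, ?_, ?_⟩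
  · have e1 := key 1 le_rfl hk
    rw [hBbar1, hgbar1] at e1
    linear_combination e1
  · intro i h2 hik
    have h1 : 1 ≤ i := le_trans (by norm_num) h2
    have h1' : 1 ≤ i - 1 := Nat.le_sub_one_of_lt (lt_of_lt_of_le (by norm_num) h2)
    have h2' : i - 1 ≤ k := le_trans (Nat.sub_le i 1) hik
    have h3' : i - 1 ≤ k - 1 := Nat.sub_le_sub_right hik 1
    have e1 := key i h1 hik
    rw [hBbar i h2 hik, hgbar i h2 hik, Matrix.sub_mulVec, Matrix.add_mulVec] at e1
    have e2 : ((C (i-1))ᵀ).mulVec (x (i - 1 - 1))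
        = ((C (i-1))ᵀ * (Bbar (i-1))⁻¹).mulVec (gbar (i-1))
          - ((C (i-1))ᵀ * (Bbar (i-1))⁻¹ * C (i-1)).mulVec (x (i-1)) := by
      rw [hx (i-1) h1' h2', Matrix.mulVec_mulVec, Matrix.mulVec_sub,
        Matrix.mulVec_mulVec, Matrix.mul_assoc]
    rw [hlam (i-1) h1' h3']
    linear_combination e1 + e2
  · intro i h1 h2
    rw [hlam i h1 h2]
    abel
  · have e2 : ((C k)ᵀ).mulVec (x (k - 1))
        = ((C k)ᵀ * (Bbar k)⁻¹).mulVec (gbar k)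
          - ((C k)ᵀ * (Bbar k)⁻¹ * C k).mulVec (x k) := by
      rw [hx k hk le_rfl, Matrix.mulVec_mulVec, Matrix.mulVec_sub,
        Matrix.mulVec_mulVec, Matrix.mul_assoc]
    rw [hSdef, Matrix.sub_mulVec] at keyS
    linear_combination keyS + e2
end

section
/- (Nonsingularity of the two-point confluent Vandermonde matrix.) Let s ≥ 1 and let t₀, t₁ be distinct real numbers. Let M be the 2s×2s real matrix whose rows are indexed by pairs (r, j) with r ∈ {0,1} and j ∈ {0,…,s−1}, whose columns are indexed by l ∈ {0,…,2s−1}, and whose entry in row (r,j) and column l equals l!/(l−j)! · t_r^{l−j} if l ≥ j and 0 if l < j. Then M is invertible. -/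
open Matrix Polynomial

private lemma entry_eq_descFactorial (l j : ℕ) (x : ℝ) :
    (if j ≤ l then ((l.factorial / (l - j).factorial : ℕ) : ℝ) * x ^ (l - j) else 0)
      = (l.descFactorial j : ℝ) * x ^ (l - j) := by
  split_ifs with h
  · rw [Nat.descFactorial_eq_div h]
  · rw [Nat.descFactorial_eq_zero_iff_lt.mpr (lt_of_not_ge h)]; simp

/-- Nonsingularity of the two-point confluent Vandermonde matrix: rows are indexed by pairs
`(r, j)` with `r ∈ {0,1}`, `j ∈ {0,…,s-1}`, columns by `l ∈ {0,…,2s-1}` (encoded here by a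
pair `c` via `l = s·c.1 + c.2`), and the entry in row `(r,j)`, column `l` is
`l!/(l-j)!·t_r^(l-j)` if `l ≥ j` and `0` otherwise. If `t₀ ≠ t₁` the matrix is invertible. -/
theorem confluent_vandermonde_invertible (s : ℕ) (hs : 1 ≤ s)
    (t : Fin 2 → ℝ) (ht : t 0 ≠ t 1)
    (M : Matrix (Fin 2 × Fin s) (Fin 2 × Fin s) ℝ)
    (hM : ∀ (r : Fin 2) (j : Fin s) (c : Fin 2 × Fin s),
      M (r, j) c =
        if j.val ≤ s * c.1.val + c.2.val then
          (((s * c.1.val + c.2.val).factorial /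
              (s * c.1.val + c.2.val - j.val).factorial : ℕ) : ℝ) *
            (t r) ^ (s * c.1.val + c.2.val - j.val)
        else 0) :
    IsUnit M := by
  rw [Matrix.isUnit_iff_isUnit_det, isUnit_iff_ne_zero]
  intro hdet
  obtain ⟨v, hv, hMv⟩ := (Matrix.exists_mulVec_eq_zero_iff).mpr hdet
  -- the polynomial with coefficients v
  set p : ℝ[X] := ∑ c : Fin 2 × Fin s, C (v c) * X ^ (s * c.1.val + c.2.val) with hp
  -- key: all derivatives of order < s vanish at t r
  have hroot : ∀ (r : Fin 2) (m : ℕ), m ≤ s - 1 → (derivative^[m] p).IsRoot (t r) := by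
    intro r m hm
    have hms : m < s := by omega
    have hrow := congrFun hMv (r, ⟨m, hms⟩)
    simp only [Matrix.mulVec, dotProduct, hM, Pi.zero_apply] at hrow
    have : (derivative^[m] p).eval (t r)
        = ∑ c : Fin 2 × Fin s,
            ((s * c.1.val + c.2.val).descFactorial m : ℝ)
              * (t r) ^ (s * c.1.val + c.2.val - m) * v c := by
      rw [hp, iterate_derivative_sum]
      simp only [iterate_derivative_C_mul, iterate_derivative_X_pow_eq_natCast_mul,
        eval_finset_sum, eval_mul, eval_pow, eval_C, eval_natCast, eval_X]
      ring_nf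
      apply Finset.sum_congr rfl
      intro c _
      ring
    rw [Polynomial.IsRoot, this, ← hrow]
    apply Finset.sum_congr rfl
    intro c _
    rw [← entry_eq_descFactorial]
  -- p = 0
  have hp0 : p = 0 := by
    by_contra hpne
    have hd : ∀ r : Fin 2, (X - C (t r)) ^ s ∣ p := by
      intro r
      have : s - 1 < p.rootMultiplicity (t r) :=
        Polynomial.lt_rootMultiplicity_of_isRoot_iterate_derivative hpne (hroot r)
      have hsle : s ≤ p.rootMultiplicity (t r) := by omega
      exact dvd_trans (pow_dvd_pow _ hsle) (Polynomial.pow_rootMultiplicity_dvd p (t r))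
    have hcop : IsCoprime ((X - C (t 0)) ^ s) ((X - C (t 1)) ^ s) :=
      (Polynomial.isCoprime_X_sub_C_of_isUnit_sub
        (sub_ne_zero_of_ne ht).isUnit).pow
    have hdvd : ((X - C (t 0)) ^ s * (X - C (t 1)) ^ s) ∣ p := hcop.mul_dvd (hd 0) (hd 1)
    have hdeg : p.natDegree ≤ 2 * s - 1 := by
      rw [hp]
      apply Polynomial.natDegree_sum_le_of_forall_le
      intro c _
      refine le_trans (Polynomial.natDegree_C_mul_le _ _) ?_
      rw [Polynomial.natDegree_X_pow]
      have h1 : c.1.val < 2 := c.1.isLt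
      have h2 : c.2.val < s := c.2.isLt
      have : c.1.val = 0 ∨ c.1.val = 1 := by omega
      rcases this with h | h <;> rw [h] <;> omega
    have hdeg2 : 2 * s ≤ p.natDegree := by
      have := Polynomial.natDegree_le_of_dvd hdvd hpne
      rw [Polynomial.natDegree_mul (pow_ne_zero _ (Polynomial.X_sub_C_ne_zero _))
        (pow_ne_zero _ (Polynomial.X_sub_C_ne_zero _))] at this
      simp only [Polynomial.natDegree_pow, Polynomial.natDegree_X_sub_C] at this
      omega
    omega
  -- hence v = 0, contradiction
  apply hv
  funext c
  have hcoeff : p.coeff (s * c.1.val + c.2.val) = v c := by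
    rw [hp, Polynomial.finset_sum_coeff]
    rw [Finset.sum_eq_single c]
    · simp
    · intro c' _ hne
      rw [Polynomial.coeff_C_mul, Polynomial.coeff_X_pow]
      have h1 : c'.1.val < 2 := c'.1.isLt
      have h2 : c'.2.val < s := c'.2.isLt
      have h3 : c.1.val < 2 := c.1.isLt
      have h4 : c.2.val < s := c.2.isLt
      have hne' : ¬(s * c'.1.val + c'.2.val = s * c.1.val + c.2.val) := by
        intro h
        apply hne
        have ha : c'.1.val = 0 ∨ c'.1.val = 1 := by omega
        have hb : c.1.val = 0 ∨ c.1.val = 1 := by omega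
        have : c'.1.val = c.1.val ∧ c'.2.val = c.2.val := by
          rcases ha with ha | ha <;> rcases hb with hb | hb <;> rw [ha, hb] at h <;> omega
        exact Prod.ext (Fin.ext this.1) (Fin.ext this.2)
      rw [if_neg fun h => hne' h.symm, mul_zero]
    · intro h
      exact absurd (Finset.mem_univ c) h
  rw [hp0] at hcoeff
  simpa using hcoeff.symm
end
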